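/- arXiv:2403.06110 — 3 statements merged into one kernel-verified Lean document; each statement's English description precedes it below -/
import Mathlib

section
/- Let n ≥ 2, f > 0, and λ₁ ≥ ... ≥ λₙ be nonzero real numbers with Σᵢ arctan(λᵢ/f) ≥ (n-2)π/2. If λₙ < 0, then Σᵢ₌₁ⁿ (1/λᵢ) ≤ 0. -/
open Real Finset

lemma my_arctan_add_le {a b : ℝ} (ha : 0 ≤ a) (hb : 0 ≤ b) :
    Real.arctan (a + b) ≤ Real.arctan a + Real.arctan b := by
  rcases lt_or_ge (a * b) 1 with h | h
  · rw [Real.arctan_add h]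
    apply Real.arctan_strictMono.monotone
    rw [le_div_iff₀ (by nlinarith)]
    nlinarith [mul_nonneg (add_nonneg ha hb) (mul_nonneg ha hb)]
  · have ha' : 0 < a := by nlinarith
    have hb' : b ≥ a⁻¹ := by
      rw [ge_iff_le, inv_le_iff_one_le_mul₀ ha']
      nlinarith
    have h1 : Real.arctan a⁻¹ ≤ Real.arctan b := Real.arctan_strictMono.monotone hb'
    rw [Real.arctan_inv_of_pos ha'] at h1
    have h2 := Real.arctan_lt_pi_div_two (a + b)
    linarith

lemma my_arctan_sum_le {ι : Type*} (s : Finset ι) (g : ι → ℝ) (hg : ∀ i ∈ s, 0 ≤ g i) :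
    Real.arctan (∑ i ∈ s, g i) ≤ ∑ i ∈ s, Real.arctan (g i) := by
  induction s using Finset.cons_induction with
  | empty => simp
  | cons a s ha ih =>
    rw [Finset.sum_cons, Finset.sum_cons]
    calc Real.arctan (g a + ∑ i ∈ s, g i)
        ≤ Real.arctan (g a) + Real.arctan (∑ i ∈ s, g i) :=
          my_arctan_add_le (hg a (Finset.mem_cons_self _ _))
            (Finset.sum_nonneg fun i hi => hg i (Finset.mem_cons_of_mem hi))
      _ ≤ _ := by
          have := ih (fun i hi => hg i (Finset.mem_cons_of_mem hi))
          linarith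

theorem stmt_1 (n : ℕ) (hn : 2 ≤ n) (f : ℝ) (hf : 0 < f)
    (lam : Fin n → ℝ) (hmono : Antitone lam) (hne : ∀ i, lam i ≠ 0)
    (hsum : ((n : ℝ) - 2) * Real.pi / 2 ≤ ∑ i, Real.arctan (lam i / f))
    (hneg : lam ⟨n - 1, by omega⟩ < 0) :
    ∑ i, 1 / lam i ≤ 0 := by
  set j : Fin n := ⟨n - 1, by omega⟩ with hj
  have hθlt : ∀ i : Fin n, Real.arctan (lam i / f) < π / 2 :=
    fun i => Real.arctan_lt_pi_div_two _
  have hjpos : 0 < -lam j := neg_pos.mpr hneg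
  have hcard : (univ.erase j).card = n - 1 := by
    rw [card_erase_of_mem (mem_univ _), card_univ, Fintype.card_fin]
  have hcast1 : ((n - 1 : ℕ) : ℝ) = (n : ℝ) - 1 := by
    have : (1 : ℕ) ≤ n := by omega
    push_cast [this]; ring
  -- split the total sum
  have hsplit : Real.arctan (lam j / f) + ∑ i ∈ univ.erase j, Real.arctan (lam i / f)
      = ∑ i, Real.arctan (lam i / f) :=
    Finset.add_sum_erase _ (fun i => Real.arctan (lam i / f)) (mem_univ j)
  -- Step 1 : positivity of the other eigenvalues, indeed lam i ≥ -lam j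
  have key1 : ∀ i ∈ univ.erase j, -lam j ≤ lam i := by
    intro i hi
    have hij : i ≠ j := (Finset.mem_erase.mp hi).1
    have hc : ((univ.erase j).erase i).card = n - 2 := by
      rw [card_erase_of_mem (Finset.mem_erase.mpr ⟨hij, mem_univ _⟩), hcard]; omega
    have hcast2 : ((n - 2 : ℕ) : ℝ) = (n : ℝ) - 2 := by push_cast [hn]; ring
    have hrest : ∑ k ∈ (univ.erase j).erase i, Real.arctan (lam k / f)
        ≤ ((n : ℝ) - 2) * (π / 2) := by
      calc ∑ k ∈ (univ.erase j).erase i, Real.arctan (lam k / f)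
          ≤ ((univ.erase j).erase i).card • (π / 2) :=
            Finset.sum_le_card_nsmul _ _ _ (fun k _ => (hθlt k).le)
        _ = ((n : ℝ) - 2) * (π / 2) := by rw [nsmul_eq_mul, hc, hcast2]
    have hsplit2 : Real.arctan (lam i / f)
        + ∑ k ∈ (univ.erase j).erase i, Real.arctan (lam k / f)
        = ∑ k ∈ univ.erase j, Real.arctan (lam k / f) :=
      Finset.add_sum_erase _ (fun k => Real.arctan (lam k / f)) (Finset.mem_erase.mpr ⟨hij, mem_univ _⟩)
    have hpair : 0 ≤ Real.arctan (lam i / f) + Real.arctan (lam j / f) := by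
      nlinarith [hsum, hsplit, hsplit2, hrest]
    have h1 : Real.arctan (-lam j / f) ≤ Real.arctan (lam i / f) := by
      rw [neg_div, Real.arctan_neg]; linarith
    have h2 : -lam j / f ≤ lam i / f := Real.arctan_strictMono.le_iff_le.mp h1
    have := (div_le_div_iff_of_pos_right hf).mp h2
    linarith
  have hpos : ∀ i ∈ univ.erase j, 0 < lam i := fun i hi => lt_of_lt_of_le hjpos (key1 i hi)
  -- Step 2 : sum of complementary angles
  have key2 : ∑ i ∈ univ.erase j, Real.arctan (f / lam i) ≤ Real.arctan (f / -lam j) := by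
    have e1 : ∀ i ∈ univ.erase j,
        Real.arctan (f / lam i) = π / 2 - Real.arctan (lam i / f) := by
      intro i hi
      rw [← inv_div, Real.arctan_inv_of_pos (div_pos (hpos i hi) hf)]
    have e2 : Real.arctan (f / -lam j) = π / 2 + Real.arctan (lam j / f) := by
      rw [← inv_div, Real.arctan_inv_of_pos (div_pos hjpos hf), neg_div, Real.arctan_neg]
      ring
    rw [Finset.sum_congr rfl e1, Finset.sum_sub_distrib, Finset.sum_const, hcard, e2,
      nsmul_eq_mul, hcast1]
    linarith [hsum, hsplit]
  -- Step 3 : subadditivity and conclusion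
  have key3 : ∑ i ∈ univ.erase j, f / lam i ≤ f / -lam j := by
    apply Real.arctan_strictMono.le_iff_le.mp
    exact le_trans (my_arctan_sum_le _ _ (fun i hi => (div_pos hf (hpos i hi)).le)) key2
  have key4 : ∑ i ∈ univ.erase j, 1 / lam i ≤ 1 / -lam j := by
    have h1 : ∑ i ∈ univ.erase j, f / lam i = f * ∑ i ∈ univ.erase j, 1 / lam i := by
      rw [Finset.mul_sum]
      exact Finset.sum_congr rfl fun i _ => by rw [div_eq_mul_one_div]
    have h2 : f / -lam j = f * (1 / -lam j) := by rw [div_eq_mul_one_div]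
    rw [h1, h2] at key3
    exact le_of_mul_le_mul_left key3 hf
  have hfin : ∑ i, 1 / lam i = 1 / lam j + ∑ i ∈ univ.erase j, 1 / lam i :=
    (Finset.add_sum_erase _ (fun i => 1 / lam i) (mem_univ j)).symm
  have : 1 / -lam j = -(1 / lam j) := by
    rw [one_div_neg_eq_neg_one_div]
  rw [hfin]
  linarith
end

section
/- Let n ≥ 2, f > 0, and λ₁ ≥ ... ≥ λₙ satisfy Σᵢ arctan(λᵢ/f) ≥ (n-2)π/2. Then for all i ≠ j, λᵢ + λⱼ ≥ 0. -/
open Real Finset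

theorem stmt_7 (n : ℕ) (hn : 2 ≤ n) (f : ℝ) (hf : 0 < f)
    (lam : Fin n → ℝ) (hmono : Antitone lam)
    (hsum : ((n : ℝ) - 2) * Real.pi / 2 ≤ ∑ i, Real.arctan (lam i / f)) :
    ∀ i j : Fin n, i ≠ j → 0 ≤ lam i + lam j := by
  intro i j hij
  set a : Fin n → ℝ := fun k => Real.arctan (lam k / f) with ha
  have hsplit : ∑ k, a k = a i + a j + ∑ k ∈ (univ \ {i, j}), a k := by
    rw [← Finset.sum_sdiff (Finset.subset_univ {i, j}),
      Finset.sum_pair hij]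
    ring
  have hcard : (univ \ ({i, j} : Finset (Fin n))).card = n - 2 := by
    rw [Finset.card_sdiff_of_subset (Finset.subset_univ _), Finset.card_pair hij,
      Finset.card_univ, Fintype.card_fin]
  have hrest : ∑ k ∈ (univ \ {i, j}), a k ≤ ((n : ℝ) - 2) * (Real.pi / 2) := by
    calc ∑ k ∈ (univ \ {i, j}), a k
        ≤ (univ \ ({i, j} : Finset (Fin n))).card • (Real.pi / 2) :=
          Finset.sum_le_card_nsmul _ _ _ (fun k _ => (Real.arctan_lt_pi_div_two _).le)
      _ = ((n : ℝ) - 2) * (Real.pi / 2) := by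
          rw [hcard, nsmul_eq_mul, Nat.cast_sub hn]
          norm_num
  have key : 0 ≤ a i + a j := by
    have := hsum
    rw [hsplit] at this
    nlinarith [hrest]
  have h2 : Real.arctan (-(lam i / f)) ≤ Real.arctan (lam j / f) := by
    rw [Real.arctan_neg]
    linarith [key]
  have h3 : -(lam i / f) ≤ lam j / f := by
    by_contra h
    push_neg at h
    exact absurd (Real.arctan_strictMono h) (not_lt.mpr h2)
  rw [← neg_div] at h3
  have := (div_le_div_iff_of_pos_right hf).mp h3
  linarith
end

section
/- Let n ≥ 2, f > 0, and λ₁, ..., λₙ be real numbers with Σᵢ arctan(λᵢ/f) = (n-2)π/2. Then Σᵢ (f/(f²+λᵢ²)) · λᵢ ≥ 0. -/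
/-!
Put `φᵢ = π/2 - arctan (λᵢ/f) ∈ (0, π)`. The critical-phase condition says `∑ φᵢ = π`, and
`f λᵢ / (f² + λᵢ²) = sin (2 arctan (λᵢ/f)) / 2 = sin (2 φᵢ) / 2`. At most one `φₖ` exceeds `π/2`;
if one does, `sin (2 φₖ) = - sin (2 ∑_{j ≠ k} φⱼ)`, which is compensated by the subadditivity of
`sin` on nonnegative angles of total at most `π`.
-/

open Real Finset

lemma Real.sin_two_mul_arctan (t : ℝ) : sin (2 * arctan t) = 2 * t / (1 + t ^ 2) := by
  have h : 0 < 1 + t ^ 2 := by positivity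
  rw [sin_two_mul, sin_arctan, cos_arctan, mul_assoc, div_mul_div_comm, mul_one,
    mul_self_sqrt h.le, mul_div_assoc]

lemma Real.sin_sum_le_sum_sin {ι : Type*} (s : Finset ι) (x : ι → ℝ) (hx : ∀ i ∈ s, 0 ≤ x i)
    (hsum : ∑ i ∈ s, x i ≤ π) : sin (∑ i ∈ s, x i) ≤ ∑ i ∈ s, sin (x i) := by
  classical
  induction s using Finset.induction_on with
  | empty => simp
  | insert a s has ih =>
    rw [sum_insert has] at hsum ⊢
    rw [sum_insert has]
    have hxa : 0 ≤ x a := hx a (mem_insert_self a s)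
    have hxs : 0 ≤ ∑ i ∈ s, x i := sum_nonneg fun i hi => hx i (mem_insert_of_mem hi)
    have hsin_a : 0 ≤ sin (x a) := sin_nonneg_of_nonneg_of_le_pi hxa (by linarith)
    have hsin_s : 0 ≤ sin (∑ i ∈ s, x i) := sin_nonneg_of_nonneg_of_le_pi hxs (by linarith)
    have ih' := ih (fun i hi => hx i (mem_insert_of_mem hi)) (by linarith)
    calc sin (x a + ∑ i ∈ s, x i)
        = sin (x a) * cos (∑ i ∈ s, x i) + cos (x a) * sin (∑ i ∈ s, x i) := sin_add _ _
      _ ≤ sin (x a) * 1 + 1 * sin (∑ i ∈ s, x i) := by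
        gcongr
        · exact cos_le_one _
        · exact cos_le_one _
      _ ≤ sin (x a) + ∑ i ∈ s, sin (x i) := by linarith

lemma Real.sum_sin_two_mul_nonneg_of_sum_eq_pi {ι : Type*} [Fintype ι] (φ : ι → ℝ)
    (hφ : ∀ i, 0 ≤ φ i) (hsum : ∑ i, φ i = π) : 0 ≤ ∑ i, sin (2 * φ i) := by
  classical
  by_cases hacute : ∀ i, φ i ≤ π / 2
  · exact sum_nonneg fun i _ =>
      sin_nonneg_of_nonneg_of_le_pi (by linarith [hφ i]) (by linarith [hacute i])
  obtain ⟨k, hk⟩ : ∃ k, π / 2 < φ k := by simpa using hacute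
  have hrest : ∑ j ∈ univ.erase k, φ j = π - φ k := by
    rw [← hsum, ← sum_erase_add _ _ (mem_univ k), add_sub_cancel_right]
  have hsin_k : sin (2 * φ k) = -sin (∑ j ∈ univ.erase k, 2 * φ j) := by
    rw [← mul_sum, hrest, show 2 * (π - φ k) = -(2 * φ k) + 2 * π by ring, sin_add_two_pi,
      sin_neg, neg_neg]
  have hsub := sin_sum_le_sum_sin (univ.erase k) (fun j => 2 * φ j)
    (fun j _ => by linarith [hφ j]) (by rw [← mul_sum, hrest]; linarith)
  rw [← sum_erase_add _ _ (mem_univ k), hsin_k]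
  linarith

theorem stmt_8_general (n : ℕ) (f : ℝ) (hf : 0 < f)
    (lam : Fin n → ℝ)
    (hsum : ∑ i, Real.arctan (lam i / f) = ((n : ℝ) - 2) * Real.pi / 2) :
    0 ≤ ∑ i, f / (f ^ 2 + lam i ^ 2) * lam i := by
  set φ : Fin n → ℝ := fun i => π / 2 - arctan (lam i / f)
  have hterm : ∀ i, f / (f ^ 2 + lam i ^ 2) * lam i = sin (2 * φ i) / 2 := fun i => by
    rw [show 2 * φ i = π - 2 * arctan (lam i / f) by ring, sin_pi_sub, sin_two_mul_arctan]
    field_simp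
  have hφ : ∀ i, 0 ≤ φ i := fun i => sub_nonneg.2 (arctan_lt_pi_div_two _).le
  have hφsum : ∑ i, φ i = π := by
    simp only [φ, sum_sub_distrib, hsum, sum_const, card_univ, Fintype.card_fin, nsmul_eq_mul]
    ring
  rw [sum_congr rfl fun i _ => hterm i, ← sum_div]
  exact div_nonneg (sum_sin_two_mul_nonneg_of_sum_eq_pi φ hφ hφsum) zero_le_two

theorem stmt_8 (n : ℕ) (hn : 2 ≤ n) (f : ℝ) (hf : 0 < f)
    (lam : Fin n → ℝ)
    (hsum : ∑ i, Real.arctan (lam i / f) = ((n : ℝ) - 2) * Real.pi / 2) :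
    0 ≤ ∑ i, f / (f ^ 2 + lam i ^ 2) * lam i :=
  stmt_8_general n f hf lam hsum
end
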